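/- There exists an edge-colouring of K_14 with 23 colours containing no monochromatic K_4 and no rainbow K_4. -/
import Mathlib


/-- No monochromatic complete subgraph on `m` vertices. -/
def NoMonoClique (n m : ℕ) (c : Sym2 (Fin n) → Fin 23) : Prop :=
  ¬ ∃ S : Finset (Fin n), S.card = m ∧
      ∃ col, ∀ x ∈ S, ∀ y ∈ S, x ≠ y → c s(x, y) = col

/-- No rainbow complete subgraph on 4 vertices. -/
def NoRainbowK4 (n : ℕ) (c : Sym2 (Fin n) → Fin 23) : Prop :=
  ¬ ∃ S : Finset (Fin n), S.card = 4 ∧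
      ∀ x ∈ S, ∀ y ∈ S, ∀ z ∈ S, ∀ w ∈ S,
        x ≠ y → z ≠ w → s(x, y) ≠ s(z, w) → c s(x, y) ≠ c s(z, w)

def mat : List (List (Fin 23)) := [
  [0, 0, 21, 21, 22, 14, 21, 22, 22, 22, 22, 21, 21, 13],
  [0, 0, 1, 22, 21, 22, 21, 21, 22, 22, 19, 21, 21, 22],
  [21, 1, 0, 2, 21, 21, 21, 15, 21, 22, 22, 22, 21, 21],
  [21, 22, 2, 0, 3, 22, 22, 21, 22, 21, 21, 22, 20, 22],
  [22, 21, 21, 3, 0, 4, 21, 22, 21, 16, 21, 22, 21, 22],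
  [14, 22, 21, 22, 4, 0, 5, 22, 21, 22, 22, 22, 22, 21],
  [21, 21, 21, 22, 21, 5, 0, 6, 22, 21, 22, 17, 22, 21],
  [22, 21, 15, 21, 22, 22, 6, 0, 7, 22, 22, 21, 22, 21],
  [22, 22, 21, 22, 21, 21, 22, 7, 0, 8, 22, 22, 22, 18],
  [22, 22, 22, 21, 16, 22, 21, 22, 8, 0, 9, 22, 21, 22],
  [22, 19, 22, 21, 21, 22, 22, 22, 22, 9, 0, 10, 21, 22],
  [21, 21, 22, 22, 22, 22, 17, 21, 22, 22, 10, 0, 11, 22],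
  [21, 21, 21, 20, 21, 22, 22, 22, 22, 21, 21, 11, 0, 12],
  [13, 22, 21, 22, 22, 21, 21, 21, 18, 22, 22, 22, 12, 0]]


def f (i j : Fin 14) : Fin 23 := (mat.getD i []).getD j 0

lemma f_symm : ∀ i j : Fin 14, f i j = f j i := by decide

def myc : Sym2 (Fin 14) → Fin 23 := Sym2.lift ⟨f, f_symm⟩

lemma myc_eq (x y : Fin 14) : myc s(x, y) = f x y := rfl

lemma sym2_ne {x y z w : Fin 14} (h : ¬((x = z ∧ y = w) ∨ (x = w ∧ y = z))) :
    s(x, y) ≠ s(z, w) := fun he => h (Sym2.eq_iff.mp he)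

set_option synthInstance.maxSize 1000 in
set_option maxHeartbeats 1000000 in
set_option maxRecDepth 10000 in
lemma noMono : ∀ a b c d : Fin 14, a ≠ b → a ≠ c → a ≠ d → b ≠ c → b ≠ d → c ≠ d →
    ¬ (f a b = f a c ∧ f a b = f a d ∧ f a b = f b c ∧ f a b = f b d ∧ f a b = f c d) := by
  decide

set_option synthInstance.maxSize 1000 in
set_option maxHeartbeats 1000000 in
set_option maxRecDepth 10000 in
lemma noRainbow : ∀ a b c d : Fin 14, a ≠ b → a ≠ c → a ≠ d → b ≠ c → b ≠ d → c ≠ d →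
    ¬ (f a b ≠ f a c ∧ f a b ≠ f a d ∧ f a b ≠ f b c ∧ f a b ≠ f b d ∧ f a b ≠ f c d ∧ f a c ≠ f a d ∧ f a c ≠ f b c ∧ f a c ≠ f b d ∧ f a c ≠ f c d ∧ f a d ≠ f b c ∧ f a d ≠ f b d ∧ f a d ≠ f c d ∧ f b c ≠ f b d ∧ f b c ≠ f c d ∧ f b d ≠ f c d) := by
  decide

lemma extract4 {S : Finset (Fin 14)} (h : S.card = 4) :
    ∃ a b c d, a ∈ S ∧ b ∈ S ∧ c ∈ S ∧ d ∈ S ∧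
      a ≠ b ∧ a ≠ c ∧ a ≠ d ∧ b ≠ c ∧ b ≠ d ∧ c ≠ d := by
  obtain ⟨a, ha⟩ := Finset.card_pos.mp (by rw [h]; norm_num)
  have h3 : (S.erase a).card = 3 := by rw [Finset.card_erase_of_mem ha, h]
  obtain ⟨b, c, d, hbc, hbd, hcd, hE⟩ := Finset.card_eq_three.mp h3
  have hb : b ∈ S.erase a := by rw [hE]; simp
  have hc : c ∈ S.erase a := by rw [hE]; simp
  have hd : d ∈ S.erase a := by rw [hE]; simp
  exact ⟨a, b, c, d, ha, (Finset.mem_erase.mp hb).2, (Finset.mem_erase.mp hc).2,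
    (Finset.mem_erase.mp hd).2, (Finset.mem_erase.mp hb).1.symm,
    (Finset.mem_erase.mp hc).1.symm, (Finset.mem_erase.mp hd).1.symm, hbc, hbd, hcd⟩

set_option maxRecDepth 10000 in
theorem K14_colouring_23_colours :
    ∃ c : Sym2 (Fin 14) → Fin 23,
      -- all 23 colours are used on (non-loop) edges of K₁₄
      (∀ col : Fin 23, ∃ e : Sym2 (Fin 14), ¬ e.IsDiag ∧ c e = col) ∧
      NoMonoClique 14 4 c ∧ NoRainbowK4 14 c := by
  refine ⟨myc, by decide, ?_, ?_⟩
  · rintro ⟨S, hcard, col, h⟩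
    obtain ⟨a, b, c, d, ha, hb, hc, hd, hab, hac, had, hbc, hbd, hcd⟩ := extract4 hcard
    have e1 := h a ha b hb hab
    have e2 := h a ha c hc hac
    have e3 := h a ha d hd had
    have e4 := h b hb c hc hbc
    have e5 := h b hb d hd hbd
    have e6 := h c hc d hd hcd
    rw [myc_eq] at e1 e2 e3 e4 e5 e6
    exact noMono a b c d hab hac had hbc hbd hcd
      ⟨e1.trans e2.symm, e1.trans e3.symm, e1.trans e4.symm, e1.trans e5.symm, e1.trans e6.symm⟩
  · rintro ⟨S, hcard, h⟩
    obtain ⟨a, b, c, d, ha, hb, hc, hd, hab, hac, had, hbc, hbd, hcd⟩ := extract4 hcard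
    have key : ∀ x ∈ S, ∀ y ∈ S, ∀ z ∈ S, ∀ w ∈ S,
        x ≠ y → z ≠ w → s(x, y) ≠ s(z, w) → f x y ≠ f z w := by
      intro x hx y hy z hz w hw hxy hzw hne
      have := h x hx y hy z hz w hw hxy hzw hne
      rwa [myc_eq, myc_eq] at this
    exact noRainbow a b c d hab hac had hbc hbd hcd
      ⟨key a ha b hb a ha c hc hab hac (sym2_ne (by tauto)), key a ha b hb a ha d hd hab had (sym2_ne (by tauto)), key a ha b hb b hb c hc hab hbc (sym2_ne (by tauto)), key a ha b hb b hb d hd hab hbd (sym2_ne (by tauto)), key a ha b hb c hc d hd hab hcd (sym2_ne (by tauto)), key a ha c hc a ha d hd hac had (sym2_ne (by tauto)), key a ha c hc b hb c hc hac hbc (sym2_ne (by tauto)), key a ha c hc b hb d hd hac hbd (sym2_ne (by tauto)), key a ha c hc c hc d hd hac hcd (sym2_ne (by tauto)), key a ha d hd b hb c hc had hbc (sym2_ne (by tauto)), key a ha d hd b hb d hd had hbd (sym2_ne (by tauto)), key a ha d hd c hc d hd had hcd (sym2_ne (by tauto)), key b hb c hc b hb d hd hbc hbd (sym2_ne (by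 tauto)), key b hb c hc c hc d hd hbc hcd (sym2_ne (by tauto)), key b hb d hd c hc d hd hbd hcd (sym2_ne (by tauto))⟩
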